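/- arXiv:2508.02543 — 2 statements merged into one kernel-verified Lean document; each statement's English description precedes it below -/
import Mathlib

section
/- Let G1 be a finite commutative group of prime order p, let G2 and GT be groups written multiplicatively with GT commutative, let e : G1 → G2 → GT be bilinear, let ĝ ∈ G2, and suppose the map a ↦ e(a, ĝ) from G1 to GT is injective. Let α, x, y be integers, let u ∈ G1 with u ≠ 1, and set w = u^α, v = u^x · w^y, τ = ĝ^α, X̂ = ĝ^x, Ŷ = ĝ^y. Then for all u', v', w' ∈ G1 with u' ≠ 1, the following are equivalent: (i) there exists an integer r with ¬ p ∣ r such that u' = u^r, v' = v^r and w' = w^r; (ii) e(u', τ) = e(w', ĝ) and e(v', ĝ) = e(u', X̂) · e(w', Ŷ). That is, a tuple with non-identity components passes the Trace pairing check with trapdoor τ together with the GVf check for issuer public key (X̂, Ŷ) if and only if it lies in the equivalence class of the master public key (u, v, w) under R. -/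
/-!
Pairing with `ĝ` is an injective homomorphism on `G1`, and bilinearity moves exponents across the
pairing, so the Trace check says exactly `w' = u'^α` and the GVf check says exactly
`v' = u'^x · w'^y`: the checked tuple satisfies the same relations as the master public key.
As `G1` has prime order, `u ≠ 1` generates it, so `u' = u^r`, and then these relations force
`(v', w') = (v^r, w^r)`; `u' ≠ 1` rules out `p ∣ r`.
-/

/-- The relations between the components of a master public key `(u, v, w)`. -/
def IsKeyFor {G : Type*} [Group G] (α x y : ℤ) (u v w : G) : Prop :=
  w = u ^ α ∧ v = u ^ x * w ^ y

theorem isKeyFor_zpow_iff {G : Type*} [CommGroup G] {α x y : ℤ} {u v w : G}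
    (h : IsKeyFor α x y u v w) (r : ℤ) {v' w' : G} :
    IsKeyFor α x y (u ^ r) v' w' ↔ v' = v ^ r ∧ w' = w ^ r := by
  obtain ⟨rfl, rfl⟩ := h
  rw [IsKeyFor, zpow_comm, and_comm]
  refine and_congr_left fun hw' => ?_
  rw [hw', mul_zpow, zpow_comm u x, zpow_comm (u ^ α) y]

section Pairing

variable {G1 G2 GT : Type*} [Group GT] (e : G1 → G2 → GT)

theorem pairing_zpow_left [Group G1]
    (hbil_left : ∀ a b : G1, ∀ c : G2, e (a * b) c = e a c * e b c)
    (a : G1) (c : G2) (n : ℤ) : e (a ^ n) c = e a c ^ n :=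
  map_zpow (MonoidHom.mk' (e · c) (hbil_left · · c)) a n

theorem pairing_zpow_right [Group G2]
    (hbil_right : ∀ a : G1, ∀ c d : G2, e a (c * d) = e a c * e a d)
    (a : G1) (c : G2) (n : ℤ) : e a (c ^ n) = e a c ^ n :=
  map_zpow (MonoidHom.mk' (e a) (hbil_right a)) c n

theorem pairing_zpow_comm [Group G1] [Group G2]
    (hbil_left : ∀ a b : G1, ∀ c : G2, e (a * b) c = e a c * e b c)
    (hbil_right : ∀ a : G1, ∀ c d : G2, e a (c * d) = e a c * e a d)
    (a : G1) (c : G2) (n : ℤ) : e a (c ^ n) = e (a ^ n) c := by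
  rw [pairing_zpow_left e hbil_left, pairing_zpow_right e hbil_right]

theorem pairing_checks_iff_isKeyFor [Group G1] [Group G2]
    (hbil_left : ∀ a b : G1, ∀ c : G2, e (a * b) c = e a c * e b c)
    (hbil_right : ∀ a : G1, ∀ c d : G2, e a (c * d) = e a c * e a d)
    {ghat : G2} (hinj : Function.Injective (fun a : G1 => e a ghat))
    (α x y : ℤ) (u v w : G1) :
    (e u (ghat ^ α) = e w ghat ∧ e v ghat = e u (ghat ^ x) * e w (ghat ^ y)) ↔
      IsKeyFor α x y u v w := by
  simp only [pairing_zpow_comm e hbil_left hbil_right, ← hbil_left]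
  rw [IsKeyFor, hinj.eq_iff, hinj.eq_iff, eq_comm]

end Pairing

theorem not_natCard_dvd_of_zpow_ne_one {G : Type*} [Group G] {g : G} {r : ℤ} (h : g ^ r ≠ 1) :
    ¬ (Nat.card G : ℤ) ∣ r := fun hdvd =>
  h <| orderOf_dvd_iff_zpow_eq_one.mp <|
    (Int.natCast_dvd_natCast.mpr (orderOf_dvd_natCard g)).trans hdvd

/-- A tuple with non-identity components passes the Trace pairing check with
trapdoor `τ` together with the GVf check for issuer public key `(X̂, Ŷ)` if
and only if it lies in the equivalence class of the master public key
`(u, v, w)` under R. -/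
theorem trace_and_gvf_iff_same_class {G1 G2 GT : Type*}
    [CommGroup G1] [Fintype G1] [Group G2] [CommGroup GT]
    (p : ℕ) (hp : p.Prime) (hcard : Fintype.card G1 = p)
    (e : G1 → G2 → GT)
    (hbil_left : ∀ a b : G1, ∀ c : G2, e (a * b) c = e a c * e b c)
    (hbil_right : ∀ a : G1, ∀ c d : G2, e a (c * d) = e a c * e a d)
    (ghat : G2) (hinj : Function.Injective (fun a : G1 => e a ghat))
    (α x y : ℤ) (u : G1) (hu : u ≠ 1)
    (w v : G1) (τ Xhat Yhat : G2)
    (hw : w = u ^ α) (hv : v = u ^ x * w ^ y)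
    (hτ : τ = ghat ^ α) (hX : Xhat = ghat ^ x) (hY : Yhat = ghat ^ y) :
    ∀ u' v' w' : G1, u' ≠ 1 →
      ((∃ r : ℤ, ¬ (p : ℤ) ∣ r ∧ u' = u ^ r ∧ v' = v ^ r ∧ w' = w ^ r) ↔
        (e u' τ = e w' ghat ∧ e v' ghat = e u' Xhat * e w' Yhat)) := by
  intro u' v' w' hu'
  have hkey : IsKeyFor α x y u v w := ⟨hw, hv⟩
  have hcard' : Nat.card G1 = p := Nat.card_eq_fintype_card.trans hcard
  have : Fact p.Prime := ⟨hp⟩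
  rw [hτ, hX, hY, pairing_checks_iff_isKeyFor e hbil_left hbil_right hinj]
  constructor
  · rintro ⟨r, -, rfl, hvw⟩
    exact (isKeyFor_zpow_iff hkey r).mpr hvw
  · intro h'
    obtain ⟨r, rfl⟩ :=
      Subgroup.mem_zpowers_iff.mp (mem_zpowers_of_prime_card hcard' hu (g' := u'))
    exact ⟨r, hcard' ▸ not_natCard_dvd_of_zpow_ne_one hu', rfl,
      (isKeyFor_zpow_iff hkey r).mp h'⟩
end

section
/- Let G1, G2, GT be commutative groups written multiplicatively and let e : G1 → G2 → GT be bilinear. Let g, u ∈ G1, ĝ ∈ G2, and let α, x, y, z, s, r be integers. Set f = g^α, w = u^α, v = u^x · w^y, τ = ĝ^α, Ŝ = ĝ^s, f̂' = τ · (ĝ^z)^s, and ρ = e(f, ĝ). Then all of the following hold simultaneously: (i) e(v^r, ĝ) = e(u^r, ĝ^x) · e(w^r, ĝ^y); (ii) e(u^r, τ) = e(w^r, ĝ); (iii) f̂' · Ŝ^{−z} = τ; and (iv) ρ = e(g, τ). That is, in an honest execution of the NGS construction — issuer keys (x, y), opener key z, user master secret α, ElGamal randomness s, nickname randomizer r —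 the nickname (u^r, v^r, w^r) passes the GVf check, the user's Trace check succeeds, the opener correctly decrypts the user's trapdoor, and the opener's identification check succeeds (the algebraic core of the correctness of the NGS construction). -/
section Bilinear

variable {G1 G2 GT : Type*} (e : G1 → G2 → GT)

theorem zpow_left_of_map_mul_left [Group G1] [Group GT]
    (hmul : ∀ a b : G1, ∀ c : G2, e (a * b) c = e a c * e b c) (a : G1) (c : G2) (m : ℤ) :
    e (a ^ m) c = e a c ^ m :=
  (MonoidHom.mk' (e · c) fun a b => hmul a b c).map_zpow a m

theorem zpow_right_of_map_mul_right [Group G2] [Group GT]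
    (hmul : ∀ a : G1, ∀ c d : G2, e a (c * d) = e a c * e a d) (a : G1) (c : G2) (m : ℤ) :
    e a (c ^ m) = e a c ^ m :=
  (MonoidHom.mk' (e a) (hmul a)).map_zpow c m

section Group

variable [Group G1] [Group G2] [Group GT]
  (hmul_left : ∀ a b : G1, ∀ c : G2, e (a * b) c = e a c * e b c)
  (hmul_right : ∀ a : G1, ∀ c d : G2, e a (c * d) = e a c * e a d)
include hmul_left hmul_right

theorem zpow_left_eq_zpow_right (a : G1) (c : G2) (m : ℤ) : e (a ^ m) c = e a (c ^ m) := by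
  rw [zpow_left_of_map_mul_left e hmul_left, zpow_right_of_map_mul_right e hmul_right]

theorem trace_check (u : G1) (c : G2) (α r : ℤ) :
    e (u ^ r) (c ^ α) = e ((u ^ α) ^ r) c := by
  rw [← zpow_left_eq_zpow_right e hmul_left hmul_right, ← zpow_mul, ← zpow_mul, mul_comm]

end Group

theorem gvf_check [Group G1] [Group G2] [CommGroup GT]
    (hmul_left : ∀ a b : G1, ∀ c : G2, e (a * b) c = e a c * e b c)
    (hmul_right : ∀ a : G1, ∀ c d : G2, e a (c * d) = e a c * e a d)
    (u w : G1) (c : G2) (x y r : ℤ) :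
    e ((u ^ x * w ^ y) ^ r) c = e (u ^ r) (c ^ x) * e (w ^ r) (c ^ y) := by
  simp only [zpow_left_of_map_mul_left e hmul_left, zpow_right_of_map_mul_right e hmul_right,
    hmul_left, mul_zpow, ← zpow_mul]

end Bilinear

theorem elgamal_decrypt {G : Type*} [CommGroup G] (τ h : G) (z s : ℤ) :
    τ * (h ^ z) ^ s * (h ^ s) ^ (-z) = τ := by
  rw [← zpow_mul, ← zpow_mul, mul_neg, mul_comm s z, zpow_neg, mul_inv_cancel_right]

/-- Algebraic core of the correctness of the NGS construction: in an honest
execution, the randomized nickname `(u^r, v^r, w^r)` passes the GVf check,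
the user's Trace check succeeds, the opener correctly decrypts the user's
trapdoor, and the opener's identification check succeeds. -/
theorem ngs_construction_correctness_core {G1 G2 GT : Type*}
    [CommGroup G1] [CommGroup G2] [CommGroup GT]
    (e : G1 → G2 → GT)
    (hbil_left : ∀ a b : G1, ∀ c : G2, e (a * b) c = e a c * e b c)
    (hbil_right : ∀ a : G1, ∀ c d : G2, e a (c * d) = e a c * e a d)
    (g u : G1) (ghat : G2) (α x y z s r : ℤ)
    (f w v : G1) (τ Shat fhat' : G2) (ρ : GT)
    (hf : f = g ^ α) (hw : w = u ^ α) (hv : v = u ^ x * w ^ y)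
    (hτ : τ = ghat ^ α) (hS : Shat = ghat ^ s)
    (hf' : fhat' = τ * (ghat ^ z) ^ s)
    (hρ : ρ = e f ghat) :
    e (v ^ r) ghat = e (u ^ r) (ghat ^ x) * e (w ^ r) (ghat ^ y) ∧
    e (u ^ r) τ = e (w ^ r) ghat ∧
    fhat' * Shat ^ (-z) = τ ∧
    ρ = e g τ := by
  subst hf hw hv hτ hS hf' hρ
  exact ⟨gvf_check e hbil_left hbil_right u (u ^ α) ghat x y r,
    trace_check e hbil_left hbil_right u ghat α r,
    elgamal_decrypt _ ghat z s,
    zpow_left_eq_zpow_right e hbil_left hbil_right g ghat α⟩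
end
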